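/- Let f ∈ L¹(ℝ) be such that sgn(ξ) f(ξ) ∈ {0, 1} for almost every ξ ∈ ℝ, and suppose there exists a finite nonnegative Borel measure ν on ℝ such that for every φ ∈ C_c^∞(ℝ), −∫_ℝ f(ξ) φ'(ξ) dξ = φ(0) − ∫_ℝ φ dν. Then, with u := ∫_ℝ f(ξ) dξ, one has f(ξ) = χ(u,ξ) for almost every ξ ∈ ℝ. -/

import Mathlib

open MeasureTheory

/-- The kinetic function `χ(u,ξ)`: `+1` if `0 ≤ ξ ≤ u`, `-1` if `u ≤ ξ ≤ 0`,
and `0` otherwise. -/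
noncomputable def chi (u ξ : ℝ) : ℝ :=
  if 0 ≤ ξ ∧ ξ ≤ u then 1 else if u ≤ ξ ∧ ξ ≤ 0 then -1 else 0

/-!
Write `H(ξ) = δ₀((-∞, ξ])` and `N(ξ) = ν((-∞, ξ])`. The weak equation says that `f - H + N` has
vanishing distributional derivative, so `f = H - N + k` a.e. for a constant `k`. Since `f` is
integrable, the limits `k` at `-∞` and `1 - ν(ℝ) + k` at `+∞` of this expression vanish. The sign
condition then forces `N ∈ {0, 1}` a.e.; being monotone, `N` is a.e. the indicator of some
`[u, ∞)`, so `f = 𝟙_{[0,∞)} - 𝟙_{[u,∞)} = χ(u, ·)` a.e., and integrating gives `u = ∫ f`.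
-/

open Set Filter Topology

lemma Real.volume_eq_top_of_mem_atTop {s : Set ℝ} (hs : s ∈ atTop) : volume s = ⊤ := by
  obtain ⟨b, hb⟩ := mem_atTop_sets.1 hs
  simpa using measure_mono (μ := volume) (show Ici b ⊆ s from hb)

lemma Real.volume_eq_top_of_mem_atBot {s : Set ℝ} (hs : s ∈ atBot) : volume s = ⊤ := by
  obtain ⟨b, hb⟩ := mem_atBot_sets.1 hs
  simpa using measure_mono (μ := volume) (show Iic b ⊆ s from hb)

section Tails

variable {E : Type*} [NormedAddCommGroup E] {F : ℝ → E} {L : E}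

lemma MeasureTheory.Integrable.eq_zero_of_tendsto_atTop (hF : Integrable F)
    (h : Tendsto F atTop (𝓝 L)) : L = 0 :=
  (hF.integrableAtFilter atTop).eq_zero_of_tendsto (fun _ => Real.volume_eq_top_of_mem_atTop) h

lemma MeasureTheory.Integrable.eq_zero_of_tendsto_atBot (hF : Integrable F)
    (h : Tendsto F atBot (𝓝 L)) : L = 0 :=
  (hF.integrableAtFilter atBot).eq_zero_of_tendsto (fun _ => Real.volume_eq_top_of_mem_atBot) h

end Tails

section CumulativeDistribution

variable (μ : Measure ℝ) [IsFiniteMeasure μ]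

lemma monotone_measureReal_Iic : Monotone fun x => μ.real (Iic x) :=
  fun _ _ hxy => measureReal_mono (Iic_subset_Iic.2 hxy)

lemma tendsto_measureReal_Iic_atTop : Tendsto (fun x => μ.real (Iic x)) atTop (𝓝 (μ.real univ)) :=
  (ENNReal.tendsto_toReal (measure_ne_top μ _)).comp (tendsto_measure_Iic_atTop μ)

lemma tendsto_measureReal_Iic_atBot : Tendsto (fun x => μ.real (Iic x)) atBot (𝓝 0) := by
  have h := tendsto_measure_iInter_atBot (μ := μ) (fun x => measurableSet_Iic.nullMeasurableSet)
    (fun _ _ hxy => Iic_subset_Iic.2 hxy) ⟨0, measure_ne_top μ _⟩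
  rw [iInter_Iic_eq_empty_iff.2 (by rw [range_id']; exact not_bddBelow_univ), measure_empty] at h
  exact (ENNReal.toReal_zero ▸ ENNReal.tendsto_toReal ENNReal.zero_ne_top).comp h

lemma dirac_real_Iic (a x : ℝ) : (Measure.dirac a).real (Iic x) = (Ici a).indicator 1 x := by
  by_cases h : a ≤ x <;> simp [measureReal_def, Measure.dirac_apply' _ measurableSet_Iic, h]

lemma integral_measureReal_Iic_mul_deriv {φ : ℝ → ℝ} (hφ : ContDiff ℝ 1 φ)
    (hφs : HasCompactSupport φ) : ∫ x, μ.real (Iic x) * deriv φ x = -∫ y, φ y ∂μ := by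
  have hφ' : Continuous (deriv φ) := hφ.continuous_deriv le_rfl
  set F : ℝ × ℝ → ℝ := {p | p.2 ≤ p.1}.indicator fun p => deriv φ p.1 with hF
  have hFint : Integrable F (volume.prod μ) := by
    refine Integrable.mono' ((hφ'.integrable_of_hasCompactSupport hφs.deriv).norm.mul_prod
      (integrable_const 1)) ((hφ'.measurable.comp measurable_fst).indicator
        (measurableSet_le measurable_snd measurable_fst)).aestronglyMeasurable
      (ae_of_all _ fun p => ?_)
    simpa [hF] using norm_indicator_le_norm_self (fun p : ℝ × ℝ => deriv φ p.1) p
  have hinner : ∀ x, ∫ y, F (x, y) ∂μ = μ.real (Iic x) * deriv φ x := fun x => by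
    rw [← smul_eq_mul, ← integral_indicator_const _ measurableSet_Iic]
    simp [hF, indicator_apply]
  have houter : ∀ y, ∫ x, F (x, y) = -φ y := fun y => by
    rw [← hφs.integral_Ioi_deriv_eq hφ y, ← integral_Ici_eq_integral_Ioi,
      ← integral_indicator measurableSet_Ici]
    simp [hF, indicator_apply]
  calc ∫ x, μ.real (Iic x) * deriv φ x = ∫ x, ∫ y, F (x, y) ∂μ := by simp only [hinner]
    _ = ∫ y, (∫ x, F (x, y)) ∂μ := integral_integral_swap (f := fun x y => F (x, y)) hFint
    _ = -∫ y, φ y ∂μ := by simp only [houter, integral_neg]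

end CumulativeDistribution

lemma exists_contDiff_hasCompactSupport_deriv_eq {h : ℝ → ℝ} (hh : ContDiff ℝ (⊤ : ℕ∞) h)
    (hhs : HasCompactSupport h) (hint : ∫ x, h x = 0) :
    ∃ Φ : ℝ → ℝ, ContDiff ℝ (⊤ : ℕ∞) Φ ∧ HasCompactSupport Φ ∧ deriv Φ = h := by
  obtain ⟨R, hR⟩ := hhs.isCompact.isBounded.subset_ball 0
  rw [Real.ball_eq_Ioo, zero_sub, zero_add] at hR
  have hΦ : ∀ x, HasDerivAt (fun x => ∫ t in (-R)..x, h t) (h x) x := fun x =>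
    (hh.continuous.integral_hasStrictDerivAt (-R) x).hasDerivAt
  have hderiv : deriv (fun x => ∫ t in (-R)..x, h t) = h := funext fun x => (hΦ x).deriv
  refine ⟨_, contDiff_infty_iff_deriv.2 ⟨fun x => (hΦ x).differentiableAt, by rwa [hderiv]⟩,
    HasCompactSupport.intro (isCompact_Icc (a := -R) (b := R)) fun x hx => ?_, hderiv⟩
  rcases not_and_or.1 hx with hx | hx <;> rw [not_le] at hx
  · refine (intervalIntegral.integral_congr (g := 0) fun t ht => ?_).trans (by simp)
    rw [uIcc_of_ge hx.le] at ht
    exact image_eq_zero_of_notMem_tsupport fun hmem => by linarith [(hR hmem).1, ht.2]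
  · rw [intervalIntegral.integral_eq_integral_of_support_subset
      ((subset_tsupport h).trans (hR.trans (Ioo_subset_Ioc_self.trans
        (Ioc_subset_Ioc_right hx.le)))), hint]

theorem ae_eq_const_of_integral_mul_deriv_eq_zero {g : ℝ → ℝ} (hg : LocallyIntegrable g)
    (h : ∀ φ : ℝ → ℝ, ContDiff ℝ (⊤ : ℕ∞) φ → HasCompactSupport φ →
      ∫ x, g x * deriv φ x = 0) :
    ∃ c, ∀ᵐ x, g x = c := by
  let θ : ContDiffBump (0 : ℝ) := ⟨1, 2, one_pos, one_lt_two⟩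
  set ρ := θ.normed volume
  have hρ : ContDiff ℝ (⊤ : ℕ∞) ρ := θ.contDiff_normed
  have hρs : HasCompactSupport ρ := θ.hasCompactSupport_normed
  have hgint : ∀ ψ : ℝ → ℝ, Continuous ψ → HasCompactSupport ψ →
      Integrable fun x => g x * ψ x :=
    fun ψ hψ hψs => hg.integrable_smul_right_of_hasCompactSupport hψ hψs
  -- `ψ - (∫ ψ) ρ` has zero mean, hence is the derivative of a test function
  have hmean : ∀ ψ : ℝ → ℝ, ContDiff ℝ (⊤ : ℕ∞) ψ → HasCompactSupport ψ →
      ∫ x, g x * ψ x = (∫ x, ψ x) * ∫ x, g x * ρ x := by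
    intro ψ hψ hψs
    set a := ∫ x, ψ x
    obtain ⟨Φ, hΦ, hΦs, hΦψ⟩ := exists_contDiff_hasCompactSupport_deriv_eq
      (h := fun x => ψ x - a * ρ x) (hψ.sub (contDiff_const.mul hρ))
      (hψs.sub hρs.mul_left) (by
        rw [integral_sub (hψ.continuous.integrable_of_hasCompactSupport hψs)
          ((hρ.continuous.integrable_of_hasCompactSupport hρs).const_mul a),
          integral_const_mul, θ.integral_normed, mul_one, sub_self])
    have hΦg := h Φ hΦ hΦs
    simp only [hΦψ, mul_sub, mul_left_comm _ a] at hΦg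
    rw [integral_sub (hgint ψ hψ.continuous hψs)
      ((hgint ρ hρ.continuous hρs).const_mul a), integral_const_mul] at hΦg
    linarith
  set c := ∫ x, g x * ρ x
  have hzero : ∀ᵐ x, g x - c = 0 := by
    refine ae_eq_zero_of_integral_contDiff_smul_eq_zero (hg.sub (locallyIntegrable_const c))
      fun ψ hψ hψs => ?_
    simp only [smul_eq_mul, mul_sub]
    rw [integral_sub (by simpa only [mul_comm] using hgint ψ hψ.continuous hψs)
      ((hψ.continuous.integrable_of_hasCompactSupport hψs).mul_const _), integral_mul_const,
      ← hmean ψ hψ hψs]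
    simp only [mul_comm, sub_self]
  exact ⟨c, hzero.mono fun x hx => sub_eq_zero.1 hx⟩

theorem exists_ae_eq_dirac_sub_measureReal_Iic_add {f : ℝ → ℝ} (hf : LocallyIntegrable f)
    (ν : Measure ℝ) [IsFiniteMeasure ν]
    (hweak : ∀ φ : ℝ → ℝ, ContDiff ℝ (⊤ : ℕ∞) φ → HasCompactSupport φ →
      -∫ ξ, f ξ * deriv φ ξ = φ 0 - ∫ ξ, φ ξ ∂ν) :
    ∃ k, ∀ᵐ ξ, f ξ = (Measure.dirac 0).real (Iic ξ) - ν.real (Iic ξ) + k := by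
  have hD := (monotone_measureReal_Iic (Measure.dirac (0 : ℝ))).locallyIntegrable (μ := volume)
  have hN := (monotone_measureReal_Iic ν).locallyIntegrable (μ := volume)
  obtain ⟨k, hk⟩ := ae_eq_const_of_integral_mul_deriv_eq_zero (hf.sub (hD.sub hN))
    fun φ hφ hφs => by
      have hφ1 : ContDiff ℝ 1 φ := hφ.of_le (by exact_mod_cast le_top)
      have hφ' : Continuous (deriv φ) := hφ1.continuous_deriv le_rfl
      have hint : ∀ {F : ℝ → ℝ}, LocallyIntegrable F → Integrable fun ξ => F ξ * deriv φ ξ :=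
        fun hF => hF.integrable_smul_right_of_hasCompactSupport hφ' hφs.deriv
      simp only [Pi.sub_apply, sub_mul]
      rw [integral_sub (hint hf) ((hint hD).sub' (hint hN)), integral_sub (hint hD) (hint hN),
        integral_measureReal_Iic_mul_deriv _ hφ1 hφs, integral_measureReal_Iic_mul_deriv _ hφ1 hφs,
        integral_dirac]
      linarith [hweak φ hφ hφs]
  exact ⟨k, hk.mono fun ξ hξ => by simp only [Pi.sub_apply] at hξ; linarith⟩

theorem Monotone.exists_ae_eq_indicator_Ici {N : ℝ → ℝ} (hN : Monotone N)
    (h01 : ∀ᵐ x, N x = 0 ∨ N x = 1) (hbot : Tendsto N atBot (𝓝 0))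
    (htop : Tendsto N atTop (𝓝 1)) :
    ∃ u, ∀ᵐ x, N x = (Ici u).indicator 1 x := by
  set S := {x | N x < 1 / 2}
  obtain ⟨a, ha⟩ := (hbot.eventually (gt_mem_nhds (by norm_num : (0 : ℝ) < 1 / 2))).exists
  obtain ⟨b, hb⟩ :=
    eventually_atTop.1 (htop.eventually (lt_mem_nhds (by norm_num : (1 / 2 : ℝ) < 1)))
  have hSbdd : BddAbove S := ⟨b, fun x hx => le_of_lt (not_le.1 fun hbx => (hb x hbx).not_gt hx)⟩
  refine ⟨sSup S, ?_⟩
  filter_upwards [h01, volume.ae_ne (sSup S)] with x hx hxu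
  rcases hxu.lt_or_gt with hlt | hgt
  · obtain ⟨y, hyS, hxy⟩ := exists_lt_of_lt_csSup ⟨a, ha⟩ hlt
    have : N x < 1 / 2 := (hN hxy.le).trans_lt hyS
    rw [indicator_of_notMem (show x ∉ Ici (sSup S) from not_le.2 hlt)]
    rcases hx with hx | hx <;> [exact hx; linarith]
  · have : ¬ N x < 1 / 2 := fun hxS => (le_csSup hSbdd hxS).not_gt hgt
    rw [indicator_of_mem (show x ∈ Ici (sSup S) from hgt.le), Pi.one_apply]
    rcases hx with hx | hx <;> [linarith; exact hx]

lemma chi_ae_eq_indicator_Ici_sub (u : ℝ) :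
    ∀ᵐ ξ, chi u ξ = (Ici 0).indicator 1 ξ - (Ici u).indicator 1 ξ := by
  filter_upwards [volume.ae_ne 0, volume.ae_ne u] with ξ h0 hu
  simp only [chi, indicator_apply, mem_Ici, Pi.one_apply]
  split_ifs <;> grind

lemma chi_ae_eq_indicator_Icc_sub (u : ℝ) :
    ∀ᵐ ξ, chi u ξ = (Icc 0 u).indicator 1 ξ - (Icc u 0).indicator 1 ξ := by
  filter_upwards [volume.ae_ne 0] with ξ h0
  simp only [chi, indicator_apply, mem_Icc, Pi.one_apply]
  split_ifs <;> grind

lemma integral_chi (u : ℝ) : ∫ ξ, chi u ξ = u := by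
  have hint : ∀ a b : ℝ, Integrable ((Icc a b).indicator (1 : ℝ → ℝ)) := fun _ _ =>
    (integrable_indicator_iff measurableSet_Icc).2 (integrableOn_const measure_Icc_lt_top.ne)
  rw [integral_congr_ae (chi_ae_eq_indicator_Icc_sub u), integral_sub (hint 0 u) (hint u 0),
    integral_indicator_one measurableSet_Icc, integral_indicator_one measurableSet_Icc,
    Real.volume_real_Icc, Real.volume_real_Icc]
  rcases le_total 0 u with hu | hu <;> simp [hu]

/-- If `f ∈ L¹(ℝ)` satisfies `sgn(ξ) f(ξ) ∈ {0,1}` a.e. and there is a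
finite nonnegative Borel measure `ν` on `ℝ` such that for every `φ ∈ C_c^∞(ℝ)`,
`-∫ f φ' = φ(0) - ∫ φ dν`, then `f(ξ) = χ(u,ξ)` a.e., where `u := ∫ f`. -/
theorem stmt10 (f : ℝ → ℝ) (hf : Integrable f)
    (hsgn : ∀ᵐ ξ : ℝ, Real.sign ξ * f ξ = 0 ∨ Real.sign ξ * f ξ = 1)
    (ν : Measure ℝ) (hν : IsFiniteMeasure ν)
    (hweak : ∀ φ : ℝ → ℝ, ContDiff ℝ (⊤ : ℕ∞) φ → HasCompactSupport φ →
      -∫ ξ : ℝ, f ξ * deriv φ ξ = φ 0 - ∫ ξ : ℝ, φ ξ ∂ν) :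
    ∀ᵐ ξ : ℝ, f ξ = chi (∫ ξ' : ℝ, f ξ') ξ := by
  obtain ⟨k, hfk⟩ := exists_ae_eq_dirac_sub_measureReal_Iic_add hf.locallyIntegrable ν hweak
  have hF := hf.congr hfk
  have hk : k = 0 := by
    simpa using hF.eq_zero_of_tendsto_atBot
      (((tendsto_measureReal_Iic_atBot _).sub (tendsto_measureReal_Iic_atBot ν)).add_const k)
  have hν1 : ν.real univ = 1 := by
    have := hF.eq_zero_of_tendsto_atTop
      (((tendsto_measureReal_Iic_atTop (Measure.dirac 0)).sub
        (tendsto_measureReal_Iic_atTop ν)).add_const k)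
    simp only [hk, probReal_univ, add_zero] at this
    linarith
  subst hk
  have hN01 : ∀ᵐ ξ, ν.real (Iic ξ) = 0 ∨ ν.real (Iic ξ) = 1 := by
    filter_upwards [hsgn, hfk, volume.ae_ne 0] with ξ hs hξ h0
    rcases h0.lt_or_gt with h | h <;>
      simp [hξ, dirac_real_Iic, Real.sign_of_neg, Real.sign_of_pos, h, h.le, not_le.2 h] at hs <;>
      grind
  obtain ⟨u, hu⟩ := (monotone_measureReal_Iic ν).exists_ae_eq_indicator_Ici hN01
    (tendsto_measureReal_Iic_atBot ν) (hν1 ▸ tendsto_measureReal_Iic_atTop ν)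
  have hfχ : ∀ᵐ ξ, f ξ = chi u ξ := by
    filter_upwards [hfk, hu, chi_ae_eq_indicator_Ici_sub u] with ξ hξ hξu hχ
    rw [hξ, hξu, hχ, dirac_real_Iic, add_zero]
  rwa [integral_congr_ae hfχ, integral_chi]
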